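/- arXiv:1812.03212 — 2 statements merged into one kernel-verified Lean document; each statement's English description precedes it below -/
import Mathlib

section
/- Let n ≥ 2 and let x be a natural number with 2^(n-1) ≤ x < 2^n - 1, so that x and x+1 are both n-bit numbers with leading digit 1. Then Λ_n(x+1) > Λ_n(x). -/
/-!
If the leading bit `b_1` is `1`, then `λ_1j = b_j`, so the first row of the concurrence vector,
i.e. its `n - 1` most significant bits, reads `x - 2^(n-1)`. Hence
`Λ_n(x) = 2^(C(n,2) - (n-1)) * (x - 2^(n-1)) + T(x)` with `T(x) < 2^(C(n,2) - (n-1))`, the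
latter because the remaining pairs carry distinct smaller powers of two. Passing from `x` to
`x + 1` raises the leading block by one, which outweighs any change in `T`.
-/

/-- `concEnc n x` is `Λ_n(x)`: the natural number whose `C(n,2)`-bit binary
representation is the concurrence vector `λ(x_[n])` of the `n`-bit binary
representation `(b_1, …, b_n)` of `x` (with `b_1` most significant).
The bit for the pair `(i,j)`, `1 ≤ i < j ≤ n`, equals `1` iff `b_i = b_j`;
pairs are ordered `(1,2),(1,3),…,(1,n),(2,3),…,(n-1,n)` with `(1,2)` the most
significant bit. -/
def concEnc (n x : ℕ) : ℕ :=
  ∑ i ∈ Finset.Icc 1 n, ∑ j ∈ Finset.Icc (i + 1) n,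
    if x.testBit (n - i) = x.testBit (n - j)
    then 2 ^ (n.choose 2 - 1 - ((i - 1) * (2 * n - i) / 2 + (j - i - 1)))
    else 0

open Finset

/-- `rowStart n i` is the number of pairs in rows `1, …, i - 1`, so `pairRank n i j` is the
position (from `0`) of `(i, j)` in the order used by `concEnc`, where that pair carries the
weight `2 ^ (C(n,2) - 1 - pairRank n i j)`. -/
def rowStart (n i : ℕ) : ℕ := (i - 1) * (2 * n - i) / 2

def pairRank (n i j : ℕ) : ℕ := rowStart n i + (j - i - 1)

def concTerm (n y i j : ℕ) : ℕ :=
  if y.testBit (n - i) = y.testBit (n - j) then 2 ^ (n.choose 2 - 1 - pairRank n i j) else 0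

def concTail (n y : ℕ) : ℕ := ∑ i ∈ Icc 2 n, ∑ j ∈ Icc (i + 1) n, concTerm n y i j

lemma sub_one_le_choose_two (n : ℕ) : n - 1 ≤ n.choose 2 := by
  cases n with
  | zero => simp
  | succ m => simp [Nat.choose_succ_succ]

lemma sum_range_ite_testBit_eq_mod_two_pow (y m : ℕ) :
    ∑ t ∈ range m, (if y.testBit t then 2 ^ t else 0) = y % 2 ^ m := by
  induction m with
  | zero => simp [Nat.mod_one]
  | succ m ih =>
    rw [sum_range_succ, ih, Nat.mod_pow_succ, ← Nat.toNat_testBit]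
    cases y.testBit m <;> simp [mul_comm]

section rowStart

variable {n i : ℕ}

lemma two_mul_rowStart (h : i ≤ 2 * n) : 2 * rowStart n i = (i - 1) * (2 * n - i) := by
  refine Nat.mul_div_cancel' ?_
  rcases Nat.even_or_odd i with hi | hi
  · exact Dvd.dvd.mul_left ((Nat.even_sub h).2 (by simp [hi])).two_dvd _
  · exact Dvd.dvd.mul_right (Nat.Odd.sub_odd hi odd_one).two_dvd _

@[simp] lemma rowStart_one : rowStart n 1 = 0 := by simp [rowStart]

lemma rowStart_two : rowStart n 2 = n - 1 := by simp [rowStart]; omega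

lemma rowStart_self : rowStart n n = n.choose 2 := by
  rw [rowStart, Nat.choose_two_right, two_mul, Nat.add_sub_cancel, mul_comm]

lemma rowStart_succ (h₁ : 1 ≤ i) (h₂ : i ≤ n) :
    rowStart n (i + 1) = rowStart n i + (n - i) := by
  have h := two_mul_rowStart (n := n) (i := i) (by omega)
  have h' := two_mul_rowStart (n := n) (i := i + 1) (by omega)
  obtain ⟨a, rfl⟩ : ∃ a, i = a + 1 := ⟨i - 1, by omega⟩
  obtain ⟨b, rfl⟩ : ∃ b, n = a + 1 + b := ⟨n - (a + 1), by omega⟩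
  rw [show 2 * (a + 1 + b) - (a + 1) = a + 2 * b + 1 by omega, Nat.add_sub_cancel] at h
  rw [show 2 * (a + 1 + b) - (a + 1 + 1) = a + 2 * b by omega, Nat.add_sub_cancel] at h'
  have : (a + 1) * (a + 2 * b) = a * (a + 2 * b + 1) + 2 * b := by ring
  omega

lemma rowStart_mono {i' : ℕ} (h₁ : 1 ≤ i) (h : i ≤ i') (h₂ : i' ≤ n) :
    rowStart n i ≤ rowStart n i' := by
  induction i', h using Nat.le_induction with
  | base => rfl
  | succ k hik ih =>
    rw [rowStart_succ (by omega) (by omega)]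
    exact (ih (by omega)).trans (Nat.le_add_right _ _)

end rowStart

section pairRank

variable {n i j : ℕ}

lemma pairRank_lt_rowStart_succ (hi : 1 ≤ i) (hij : i < j) (hj : j ≤ n) :
    pairRank n i j < rowStart n (i + 1) := by
  rw [pairRank, rowStart_succ hi (by omega)]
  omega

lemma pairRank_lt_choose_two (hi : 1 ≤ i) (hij : i < j) (hj : j ≤ n) :
    pairRank n i j < n.choose 2 :=
  (pairRank_lt_rowStart_succ hi hij hj).trans_le
    (rowStart_self (n := n) ▸ rowStart_mono (by omega) (by omega) le_rfl)

lemma pairRank_lt_pairRank {i' j' : ℕ} (hi : 1 ≤ i) (hij : i < j) (hj : j ≤ n)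
    (hii' : i < i') (hi' : i' ≤ n) : pairRank n i j < pairRank n i' j' :=
  calc pairRank n i j < rowStart n (i + 1) := pairRank_lt_rowStart_succ hi hij hj
    _ ≤ rowStart n i' := rowStart_mono (by omega) hii' hi'
    _ ≤ pairRank n i' j' := Nat.le_add_right _ _

lemma pairRank_injOn :
    Set.InjOn (fun p : (_ : ℕ) × ℕ => pairRank n p.1 p.2)
      ((Icc 1 n).sigma fun i => Icc (i + 1) n) := by
  rintro ⟨i, j⟩ hp ⟨i', j'⟩ hp' h
  simp only [coe_sigma, Set.mem_sigma_iff, coe_Icc, Set.mem_Icc] at hp hp' h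
  rcases lt_trichotomy i i' with hlt | rfl | hgt
  · exact absurd h (pairRank_lt_pairRank (by omega) (by omega) (by omega) hlt (by omega)).ne
  · simp only [pairRank] at h
    rw [show j = j' by omega]
  · exact absurd h (pairRank_lt_pairRank (by omega) (by omega) (by omega) hgt (by omega)).ne'

end pairRank

lemma concTerm_one {n y j : ℕ} (hy : y.testBit (n - 1) = true) (hj : j ∈ Icc 2 n) :
    concTerm n y 1 j =
      2 ^ (n.choose 2 - (n - 1)) * (if y.testBit (n - j) then 2 ^ (n - j) else 0) := by
  have := sub_one_le_choose_two n
  rw [mem_Icc] at hj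
  simp only [concTerm, pairRank, rowStart_one, hy, zero_add, Bool.true_eq]
  split_ifs
  · rw [← pow_add]
    congr 1
    omega
  · rfl

lemma sum_concTerm_one {n y : ℕ} (hy : y.testBit (n - 1) = true) :
    ∑ j ∈ Icc 2 n, concTerm n y 1 j = 2 ^ (n.choose 2 - (n - 1)) * (y % 2 ^ (n - 1)) := by
  rw [← sum_range_ite_testBit_eq_mod_two_pow, mul_sum,
    sum_congr rfl fun j hj => concTerm_one hy hj]
  refine sum_nbij' (n - ·) (n - ·) ?_ ?_ ?_ ?_ (fun _ _ => rfl) <;>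
    intro j hj <;> simp_all only [mem_Icc, mem_range] <;> omega

lemma concTail_lt (n y : ℕ) : concTail n y < 2 ^ (n.choose 2 - (n - 1)) := by
  set S := (Icc 2 n).sigma fun i => Icc (i + 1) n
  have hS : S ⊆ (Icc 1 n).sigma fun i => Icc (i + 1) n :=
    sigma_mono (Icc_subset_Icc_left one_le_two) fun _ => subset_rfl
  have hrank : ∀ p ∈ S, n - 1 ≤ pairRank n p.1 p.2 ∧ pairRank n p.1 p.2 < n.choose 2 := by
    rintro ⟨i, j⟩ hp
    simp only [S, mem_sigma, mem_Icc] at hp ⊢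
    refine ⟨?_, pairRank_lt_choose_two (by omega) (by omega) hp.2.2⟩
    exact rowStart_two ▸ (rowStart_mono (by norm_num) hp.1.1 hp.1.2).trans (Nat.le_add_right _ _)
  set e := fun p : (_ : ℕ) × ℕ => n.choose 2 - 1 - pairRank n p.1 p.2
  have he_injOn : Set.InjOn e S := fun p hp q hq h => by
    have := hrank p hp
    have := hrank q hq
    exact pairRank_injOn (hS hp) (hS hq) (show pairRank n p.1 p.2 = pairRank n q.1 q.2 by
      simp only [e] at h; omega)
  have he_lt : ∀ k ∈ S.image e, k < n.choose 2 - (n - 1) := by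
    simp only [mem_image]
    rintro _ ⟨p, hp, rfl⟩
    have := hrank p hp
    simp only [e]
    omega
  calc concTail n y ≤ ∑ p ∈ S, 2 ^ e p := by
        rw [concTail, sum_sigma']
        gcongr with p
        unfold concTerm
        split_ifs <;> simp [e]
    _ = ∑ k ∈ S.image e, 2 ^ k := (sum_image he_injOn).symm
    _ < 2 ^ (n.choose 2 - (n - 1)) := Nat.geomSum_lt le_rfl he_lt

lemma concEnc_eq_of_testBit {n y : ℕ} (hn : 1 ≤ n) (hy : y.testBit (n - 1) = true) :
    concEnc n y = 2 ^ (n.choose 2 - (n - 1)) * (y % 2 ^ (n - 1)) + concTail n y := by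
  show ∑ i ∈ Icc 1 n, ∑ j ∈ Icc (i + 1) n, concTerm n y i j = _
  rw [← sum_concTerm_one hy, concTail, ← insert_Icc_add_one_left_eq_Icc hn,
    sum_insert (by simp)]
  rfl

lemma concEnc_eq_of_two_pow_le_of_lt {n y : ℕ} (h₁ : 2 ^ (n - 1) ≤ y) (h₂ : y < 2 ^ n) :
    concEnc n y = 2 ^ (n.choose 2 - (n - 1)) * (y - 2 ^ (n - 1)) + concTail n y := by
  obtain ⟨m, rfl⟩ : ∃ m, n = m + 1 := ⟨n - 1, by cases n <;> simp_all⟩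
  rw [Nat.add_sub_cancel] at h₁ ⊢
  have hy : y.testBit m = true := Nat.testBit_of_two_pow_le_and_two_pow_add_one_gt h₁ h₂
  rw [concEnc_eq_of_testBit (by omega) (by simpa using hy), Nat.add_sub_cancel,
    Nat.mod_eq_sub_mod h₁, Nat.mod_eq_of_lt (by rw [pow_succ] at h₂; omega)]

theorem stmt_4_general (n x : ℕ) (hx1 : 2 ^ (n - 1) ≤ x)
    (hx2 : x < 2 ^ n - 1) :
    concEnc n (x + 1) > concEnc n x := by
  rw [concEnc_eq_of_two_pow_le_of_lt hx1 (by omega),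
    concEnc_eq_of_two_pow_le_of_lt (by omega) (by omega),
    show x + 1 - 2 ^ (n - 1) = x - 2 ^ (n - 1) + 1 by omega, mul_add_one]
  have := concTail_lt n x
  omega

/-- For `n ≥ 2` and `2^(n-1) ≤ x < 2^n - 1` (so `x` and `x+1` are `n`-bit
numbers with leading digit `1`), `Λ_n(x+1) > Λ_n(x)`. -/
theorem stmt_4 (n x : ℕ) (hn : 2 ≤ n) (hx1 : 2 ^ (n - 1) ≤ x)
    (hx2 : x < 2 ^ n - 1) :
    concEnc n (x + 1) > concEnc n x :=
  stmt_4_general n x hx1 hx2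
end

section
/- For every n ≥ 1 and every natural number x with 0 ≤ x < 2^n, one has Λ_{n+1}(x) = (2^n - 1 - x)·2^(C(n,2)) + Λ_n(x); that is, prepending a 0 bit to an n-bit string x yields a concurrence vector whose encoding equals the complement of x concatenated with λ(x): λ(0⋮x) = x̄ ⋮ λ(x). -/
open Finset

theorem sum_range_ite_testBit {n x : ℕ} (hx : x < 2 ^ n) :
    ∑ k ∈ range n, (if x.testBit k then 2 ^ k else 0) = x := by
  have hbits : (range n).filter (fun k => x.testBit k) = x.bitIndices.toFinset := by
    ext k
    simp only [mem_filter, mem_range, List.mem_toFinset, Nat.mem_bitIndices, and_iff_right_iff_imp]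
    intro hk
    exact (Nat.pow_lt_pow_iff_right (by norm_num)).mp ((Nat.ge_two_pow_of_testBit hk).trans_lt hx)
  rw [← sum_filter, hbits, List.sum_toFinset _ Nat.bitIndices_nodup, Nat.sum_map_two_pow_bitIndices]

theorem sum_range_ite_not_testBit {n x : ℕ} (hx : x < 2 ^ n) :
    ∑ k ∈ range n, (if !x.testBit k then 2 ^ k else 0) = 2 ^ n - 1 - x := by
  have hsum : ∑ k ∈ range n,
      ((if !x.testBit k then 2 ^ k else 0) + (if x.testBit k then 2 ^ k else 0)) = 2 ^ n - 1 := by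
    rw [show 2 ^ n - 1 = ∑ k ∈ range n, 2 ^ k by simp [Nat.geomSum_eq le_rfl]]
    exact sum_congr rfl fun k _ => by cases x.testBit k <;> simp
  rw [sum_add_distrib, sum_range_ite_testBit hx] at hsum
  omega

theorem sum_Icc_add_one {M : Type*} [AddCommMonoid M] (f : ℕ → M) (a b : ℕ) :
    ∑ i ∈ Icc (a + 1) (b + 1), f i = ∑ i ∈ Icc a b, f (i + 1) := by
  rw [← map_add_right_Icc, sum_map]
  rfl

/-- The `0`-based index of the pair `(i, j)` in the order `(1,2), …, (1,n), (2,3), …`: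
the rows `1, …, i - 1` hold `(i - 1)(2n - i)/2` pairs. -/
def pairPos (n i j : ℕ) : ℕ := (i - 1) * (2 * n - i) / 2 + (j - i - 1)

theorem concEnc_eq_sum_pairPos (n x : ℕ) :
    concEnc n x = ∑ i ∈ Icc 1 n, ∑ j ∈ Icc (i + 1) n,
      if x.testBit (n - i) = x.testBit (n - j) then 2 ^ (n.choose 2 - 1 - pairPos n i j) else 0 :=
  rfl

theorem pairPos_succ_succ {n i : ℕ} (j : ℕ) (h₁ : 1 ≤ i) (h₂ : i ≤ 2 * n) :
    pairPos (n + 1) (i + 1) (j + 1) = pairPos n i j + n := by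
  obtain ⟨i, rfl⟩ : ∃ k, i = k + 1 := ⟨i - 1, by omega⟩
  obtain ⟨m, hm⟩ : ∃ m, 2 * n = i + 1 + m := ⟨2 * n - (i + 1), by omega⟩
  have hprod : (i + 1) * (m + 1) = i * m + 2 * n := by rw [mul_add, add_mul]; omega
  simp only [pairPos, Nat.add_sub_cancel, show 2 * (n + 1) - (i + 1 + 1) = m + 1 by omega,
    show 2 * n - (i + 1) = m by omega, hprod, Nat.add_mul_div_left _ _ two_pos]
  omega

theorem concEnc_succ (n x : ℕ) :
    concEnc (n + 1) x =
      (∑ k ∈ range n, if x.testBit n = x.testBit k then 2 ^ k else 0) * 2 ^ n.choose 2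
        + concEnc n x := by
  have hchoose : (n + 1).choose 2 = n.choose 2 + n := by
    rw [Nat.choose_succ_succ, Nat.choose_one_right, add_comm]
  rw [concEnc_eq_sum_pairPos, ← insert_Icc_add_one_left_eq_Icc (by omega : 1 ≤ n + 1),
    sum_insert (by simp), sum_Icc_add_one, sum_Icc_add_one, concEnc_eq_sum_pairPos, hchoose]
  congr 1
  · rw [sum_mul]
    refine sum_nbij' (fun j => n - j) (fun k => n - k) ?_ ?_ ?_ ?_ fun j hj => ?_
    any_goals (simp only [mem_Icc, mem_range] at *; omega)
    simp only [mem_Icc] at hj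
    have hpos : pairPos (n + 1) 1 (j + 1) = j - 1 := by simp [pairPos]
    rw [hpos, Nat.add_sub_cancel, Nat.add_sub_add_right, ite_zero_mul, ← pow_add]
    congr 2
    omega
  · refine sum_congr rfl fun i hi => ?_
    rw [sum_Icc_add_one]
    refine sum_congr rfl fun j hj => ?_
    simp only [mem_Icc] at hi hj
    rw [pairPos_succ_succ j hi.1 (by omega), Nat.add_sub_add_right, Nat.add_sub_add_right]
    congr 2
    omega

theorem stmt_5_general (n x : ℕ) (hx : x < 2 ^ n) :
    concEnc (n + 1) x = (2 ^ n - 1 - x) * 2 ^ n.choose 2 + concEnc n x := by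
  have htop : x.testBit n = false := Nat.testBit_lt_two_pow hx
  rw [concEnc_succ, ← sum_range_ite_not_testBit hx]
  congr 2
  exact sum_congr rfl fun k _ => by cases x.testBit k <;> simp [htop]

/-- Prepending a `0` bit: for `n ≥ 1` and `x < 2^n`,
`Λ_{n+1}(x) = (2^n - 1 - x)·2^C(n,2) + Λ_n(x)`, i.e. `λ(0⋮x) = x̄ ⋮ λ(x)`. -/
theorem stmt_5 (n x : ℕ) (hn : 1 ≤ n) (hx : x < 2 ^ n) :
    concEnc (n + 1) x = (2 ^ n - 1 - x) * 2 ^ n.choose 2 + concEnc n x :=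
  stmt_5_general n x hx
end
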